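/- Let Γ be d-Ahlfors regular with measure σ. For each Whitney cube Q of Ω = ℝⁿ \ Γ let ξ_Q ∈ 60Q ∩ Γ and α_Q = α_σ(ξ_Q, 2^{10} ℓ(Q)). Suppose μ_Q = c_Q μ_{P_Q} is a flat measure with dist_{ξ_Q, 2^{10}ℓ(Q)}(μ_Q, σ) ≤ 2α_Q. Then there is ε > 0 depending only on C_σ, d, n such that if α_Q ≤ ε then: dist(ξ_Q, P_Q) ≤ 5ℓ(Q), dist(2Q, P_Q) ≥ 5ℓ(Q)/√n, and ε ≤ c_Q ≤ 1/ε. -/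

import Mathlib

/-!
Test the Wasserstein bound against the tent functions `y ↦ (ρ - |y - p|)₊`: they are 1-Lipschitz,
supported in `B(p, ρ)`, and their integral against a measure lies between `ρ/2` times the mass of
`B(p, ρ/2)` and `ρ` times the mass of `B(p, ρ)`. Ahlfors regularity controls the `σ`-mass of balls
centred at `ξ_Q`, while `c_Q μ_P` gives mass `c_Q ω_d t^d` to every ball of radius `t` centred on
`P`, where `ω_d` is the `ℋ^d`-measure of the unit ball of `ℝ^d`. So when `α_Q` is small, `P` meets
`B(ξ_Q, 5ℓ(Q))` because `σ` has mass there; testing at scale `2^10 ℓ(Q)` around `ξ_Q` bounds `c_Q`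
below, and testing around a point of `P` near `ξ_Q` bounds it above. Finally, with `s = ℓ(Q)/√n`
the side of `Q`, a point of `P` within `5s` of `2Q` is the centre of a ball of radius `4s` inside
`20Q ⊂ Ω`: it carries no `σ`-mass but `μ_Q`-mass `≳ c_Q s^d`, contradicting the lower bound
on `c_Q`.
-/

open MeasureTheory Metric Set

noncomputable section

/-- `Lip x r`: the set of 1-Lipschitz functions supported in the closed ball `B̄(x,r)`. -/
def LipIn {E : Type*} [NormedAddCommGroup E] (x : E) (r : ℝ) : Set (E → ℝ) :=
  {f | LipschitzWith 1 f ∧ ∀ y ∉ closedBall x r, f y = 0}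

/-- Normalized Wasserstein distance `dist_{x,r}(μ,ν)`. -/
def wdist {E : Type*} [NormedAddCommGroup E] [MeasurableSpace E] (d : ℕ) (x : E) (r : ℝ)
    (μ ν : Measure E) : ℝ :=
  r ^ (-(d : ℝ) - 1) * ⨆ f : LipIn x r, |∫ y, f.1 y ∂μ - ∫ y, f.1 y ∂ν|

/-- A flat measure: a positive multiple of the `d`-dimensional Hausdorff measure on an
affine `d`-plane. -/
def IsFlatMeasure {E : Type*} [NormedAddCommGroup E] [NormedSpace ℝ E]
    [MeasurableSpace E] [BorelSpace E] (d : ℕ) (μ : Measure E) : Prop :=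
  ∃ (c : ℝ) (P : AffineSubspace ℝ E), 0 < c ∧ (P : Set E).Nonempty ∧
    Module.finrank ℝ P.direction = d ∧
    μ = ENNReal.ofReal c • (μH[(d : ℝ)]).restrict (P : Set E)

/-- Tolsa's α-number `α_σ(x,r)`. -/
def alphaNum {E : Type*} [NormedAddCommGroup E] [NormedSpace ℝ E]
    [MeasurableSpace E] [BorelSpace E] (d : ℕ) (σ : Measure E) (x : E) (r : ℝ) : ℝ :=
  ⨅ μ : {μ : Measure E // IsFlatMeasure d μ}, wdist d x r σ μ.1

/-- `σ` is `d`-Ahlfors regular on `Γ` with constant `C`. -/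
def AhlforsRegular {E : Type*} [NormedAddCommGroup E] [MeasurableSpace E]
    (σ : Measure E) (Γ : Set E) (d : ℝ) (C : ℝ) : Prop :=
  ∀ x ∈ Γ, ∀ r > 0, ENNReal.ofReal (C⁻¹ * r ^ d) ≤ σ (ball x r) ∧
    σ (ball x r) ≤ ENNReal.ofReal (C * r ^ d)

/-- The dilate `kQ` of the axis-parallel cube with center `z` and sidelength `s`. -/
def cubeDilate (n : ℕ) (z : EuclideanSpace ℝ (Fin n)) (s k : ℝ) :
    Set (EuclideanSpace ℝ (Fin n)) :=
  {X | ∀ i, |X i - z i| ≤ k * s / 2}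

open Module
open scoped ENNReal

section Tent

variable {X : Type*} [PseudoMetricSpace X] {p y : X} {ρ : ℝ}

def tent (p : X) (ρ : ℝ) (y : X) : ℝ := max (ρ - dist y p) 0

lemma tent_nonneg : 0 ≤ tent p ρ y := le_max_right _ _

lemma tent_le (hρ : 0 ≤ ρ) : tent p ρ y ≤ ρ :=
  max_le (sub_le_self _ dist_nonneg) hρ

lemma tent_eq_zero_of_notMem_ball (hy : y ∉ ball p ρ) : tent p ρ y = 0 :=
  max_eq_right (by rw [mem_ball, not_lt] at hy; linarith)

lemma half_le_tent (hy : y ∈ ball p (ρ / 2)) : ρ / 2 ≤ tent p ρ y :=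
  le_max_of_le_left (by rw [mem_ball] at hy; linarith)

lemma lipschitzWith_tent (p : X) (ρ : ℝ) : LipschitzWith 1 (tent p ρ) := by
  have := ((LipschitzWith.const ρ).sub (LipschitzWith.dist_left p)).max_const 0
  rwa [zero_add] at this

variable [MeasurableSpace X] {μ : Measure X}

lemma integral_tent_le (hμ : μ (ball p ρ) ≠ ∞) (hρ : 0 ≤ ρ) :
    ∫ y, tent p ρ y ∂μ ≤ ρ * μ.real (ball p ρ) := by
  rw [← setIntegral_eq_integral_of_forall_compl_eq_zero fun (y : X) hy =>
    tent_eq_zero_of_notMem_ball hy]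
  exact (le_abs_self _).trans <| norm_setIntegral_le_of_norm_le_const hμ.lt_top fun y _ =>
    (Real.norm_of_nonneg tent_nonneg).trans_le (tent_le hρ)

variable [OpensMeasurableSpace X]

lemma integrable_tent (hμ : μ (ball p ρ) ≠ ∞) (hρ : 0 ≤ ρ) : Integrable (tent p ρ) μ := by
  refine (integrableOn_iff_integrable_of_support_subset fun y hy => ?_).1
    (Measure.integrableOn_of_bounded hμ (lipschitzWith_tent p ρ).continuous.aestronglyMeasurable
      (M := ρ) (Filter.Eventually.of_forall fun y => ?_))
  · by_contra h
    exact hy (tent_eq_zero_of_notMem_ball h)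
  · rw [Real.norm_of_nonneg tent_nonneg]
    exact tent_le hρ

lemma half_mul_measureReal_le_integral_tent (hμ : μ (ball p ρ) ≠ ∞) (hρ : 0 ≤ ρ) :
    ρ / 2 * μ.real (ball p (ρ / 2)) ≤ ∫ y, tent p ρ y ∂μ := by
  have hint := integrable_tent hμ hρ
  calc ρ / 2 * μ.real (ball p (ρ / 2)) ≤ ∫ y in ball p (ρ / 2), tent p ρ y ∂μ :=
        setIntegral_ge_of_const_le_real measurableSet_ball
          (measure_ne_top_of_subset (ball_subset_ball (by linarith)) hμ)
          (fun y hy => half_le_tent hy) hint.integrableOn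
    _ ≤ ∫ y, tent p ρ y ∂μ :=
        setIntegral_le_integral hint (Filter.Eventually.of_forall fun _ => tent_nonneg)

end Tent

namespace AhlforsRegular

variable {E : Type*} [NormedAddCommGroup E] [MeasurableSpace E] {σ : Measure E} {Γ : Set E}
  {d : ℕ} {C ρ : ℝ} {x : E}

lemma measure_ball_le (h : AhlforsRegular σ Γ d C) (hx : x ∈ Γ) (hρ : 0 < ρ) :
    σ (ball x ρ) ≤ ENNReal.ofReal (C * ρ ^ d) := by
  simpa [Real.rpow_natCast] using (h x hx ρ hρ).2

lemma measure_ball_ne_top (h : AhlforsRegular σ Γ d C) (hx : x ∈ Γ) (ρ : ℝ) :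
    σ (ball x ρ) ≠ ∞ := by
  rcases le_or_gt ρ 0 with hρ | hρ
  · simp [ball_eq_empty.2 hρ]
  · exact ne_top_of_le_ne_top ENNReal.ofReal_ne_top (h.measure_ball_le hx hρ)

lemma measure_closedBall_ne_top (h : AhlforsRegular σ Γ d C) (hx : x ∈ Γ) (ρ : ℝ) :
    σ (closedBall x ρ) ≠ ∞ :=
  measure_ne_top_of_subset (closedBall_subset_ball (lt_add_one ρ)) (h.measure_ball_ne_top hx _)

lemma measureReal_ball_le (h : AhlforsRegular σ Γ d C) (hx : x ∈ Γ) (hC : 0 ≤ C)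
    (hρ : 0 < ρ) : σ.real (ball x ρ) ≤ C * ρ ^ d :=
  ENNReal.toReal_le_of_le_ofReal (by positivity) (h.measure_ball_le hx hρ)

lemma le_measureReal_ball (h : AhlforsRegular σ Γ d C) (hx : x ∈ Γ) (hρ : 0 < ρ) :
    C⁻¹ * ρ ^ d ≤ σ.real (ball x ρ) :=
  (ENNReal.ofReal_le_iff_le_toReal (h.measure_ball_ne_top hx ρ)).1
    (by simpa [Real.rpow_natCast] using (h x hx ρ hρ).1)

end AhlforsRegular

section Wasserstein

variable {E : Type*} [NormedAddCommGroup E] {x : E} {r : ℝ}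

lemma tent_mem_lipIn {p : E} {ρ : ℝ} (h : dist p x + ρ ≤ r) : tent p ρ ∈ LipIn x r := by
  refine ⟨lipschitzWith_tent p ρ, fun y hy => tent_eq_zero_of_notMem_ball fun hyp => hy ?_⟩
  rw [mem_ball] at hyp
  rw [mem_closedBall]
  linarith [dist_triangle y p x]

lemma wdist_comm [MeasurableSpace E] (d : ℕ) (x : E) (r : ℝ) (μ ν : Measure E) :
    wdist d x r μ ν = wdist d x r ν μ := by
  simp only [wdist, abs_sub_comm]

lemma wdist_nonneg [MeasurableSpace E] (d : ℕ) (μ ν : Measure E) (hr : 0 ≤ r) :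
    0 ≤ wdist d x r μ ν :=
  mul_nonneg (Real.rpow_nonneg hr _) (Real.iSup_nonneg fun _ => abs_nonneg _)

variable [NormedSpace ℝ E] [Nontrivial E] {f : E → ℝ}

lemma abs_le_of_mem_lipIn (hf : f ∈ LipIn x r) (hr : 0 ≤ r) (y : E) : |f y| ≤ 2 * r + 1 := by
  by_cases hy : y ∈ closedBall x r
  · obtain ⟨v, hv⟩ := exists_norm_eq E (by linarith : 0 ≤ r + 1)
    have hvx : dist (x + v) x = r + 1 := by simpa using hv
    have hfv : f (x + v) = 0 := hf.2 _ (by rw [mem_closedBall, hvx]; linarith)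
    calc |f y| = dist (f y) (f (x + v)) := by rw [hfv, Real.dist_0_eq_abs]
      _ ≤ dist y (x + v) := by simpa using hf.1.dist_le_mul y (x + v)
      _ ≤ dist y x + dist (x + v) x := dist_triangle_right _ _ _
      _ ≤ 2 * r + 1 := by rw [hvx]; linarith [mem_closedBall.1 hy]
  · rw [hf.2 y hy, abs_zero]
    linarith

variable [MeasurableSpace E] {μ ν : Measure E}

lemma abs_integral_le_of_mem_lipIn (hf : f ∈ LipIn x r) (hr : 0 ≤ r)
    (hμ : μ (closedBall x r) ≠ ∞) :
    |∫ y, f y ∂μ| ≤ (2 * r + 1) * μ.real (closedBall x r) := by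
  rw [← setIntegral_eq_integral_of_forall_compl_eq_zero hf.2]
  exact norm_setIntegral_le_of_norm_le_const hμ.lt_top fun y _ =>
    (Real.norm_eq_abs _).trans_le (abs_le_of_mem_lipIn hf hr y)

lemma abs_integral_sub_le_wdist (d : ℕ) (hf : f ∈ LipIn x r) (hr : 0 < r)
    (hμ : μ (closedBall x r) ≠ ∞) (hν : ν (closedBall x r) ≠ ∞) :
    |∫ y, f y ∂μ - ∫ y, f y ∂ν| ≤ r ^ (d + 1) * wdist d x r μ ν := by
  have hbdd : BddAbove (range fun g : LipIn x r => |∫ y, g.1 y ∂μ - ∫ y, g.1 y ∂ν|) := by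
    refine ⟨(2 * r + 1) * μ.real (closedBall x r) + (2 * r + 1) * ν.real (closedBall x r), ?_⟩
    rintro _ ⟨g, rfl⟩
    exact (abs_sub _ _).trans (add_le_add (abs_integral_le_of_mem_lipIn g.2 hr.le hμ)
      (abs_integral_le_of_mem_lipIn g.2 hr.le hν))
  have hpow : r ^ (d + 1) * r ^ (-(d : ℝ) - 1) = 1 := by
    rw [← Real.rpow_natCast, ← Real.rpow_add hr]
    norm_num
  rw [wdist, ← mul_assoc, hpow, one_mul]
  exact le_ciSup hbdd ⟨f, hf⟩

variable [OpensMeasurableSpace E]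

lemma half_mul_measureReal_ball_le_add_wdist {d : ℕ} {p : E} {ρ : ℝ} (hρ : 0 < ρ)
    (h : dist p x + ρ ≤ r) (hμ : μ (closedBall x r) ≠ ∞) (hν : ν (closedBall x r) ≠ ∞) :
    ρ / 2 * μ.real (ball p (ρ / 2)) ≤ ρ * ν.real (ball p ρ) + r ^ (d + 1) * wdist d x r μ ν := by
  have hsub : ball p ρ ⊆ closedBall x r := fun y hy => by
    rw [mem_ball] at hy
    rw [mem_closedBall]
    linarith [dist_triangle y p x]
  have hr : 0 < r := by linarith [dist_nonneg (x := p) (y := x)]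
  have hcmp := abs_integral_sub_le_wdist d (tent_mem_lipIn h) hr hμ hν
  have hlow := half_mul_measureReal_le_integral_tent (measure_ne_top_of_subset hsub hμ) hρ.le
  have hupp := integral_tent_le (measure_ne_top_of_subset hsub hν) hρ.le
  linarith [le_abs_self (∫ y, tent p ρ y ∂μ - ∫ y, tent p ρ y ∂ν)]

lemma AhlforsRegular.inv_mul_pow_le_measureReal_ball_add_wdist {σ : Measure E} {Γ : Set E}
    {d : ℕ} {C ρ : ℝ} (hσ : AhlforsRegular σ Γ d C) (hx : x ∈ Γ) (hρ : 0 < ρ) (hρr : ρ ≤ r)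
    (hμ : μ (closedBall x r) ≠ ∞) :
    C⁻¹ * (ρ / 2) ^ (d + 1) ≤ ρ * μ.real (ball x ρ) + r ^ (d + 1) * wdist d x r μ σ := by
  have hcmp := half_mul_measureReal_ball_le_add_wdist (d := d) hρ (by rwa [dist_self, zero_add])
    (hσ.measure_closedBall_ne_top hx r) hμ
  rw [wdist_comm] at hcmp
  calc C⁻¹ * (ρ / 2) ^ (d + 1) = ρ / 2 * (C⁻¹ * (ρ / 2) ^ d) := by ring
    _ ≤ ρ / 2 * σ.real (ball x (ρ / 2)) := by
        gcongr
        exact hσ.le_measureReal_ball hx (by positivity)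
    _ ≤ _ := hcmp

end Wasserstein

def unitBallMeasure (d : ℕ) : ℝ :=
  (μH[(d : ℝ)] : Measure (EuclideanSpace ℝ (Fin d))).real (ball 0 1)

lemma unitBallMeasure_pos (d : ℕ) : 0 < unitBallMeasure d :=
  ENNReal.toReal_pos (measure_ball_pos _ _ one_pos).ne' measure_ball_lt_top.ne

section FlatMeasure

variable {E : Type*} [NormedAddCommGroup E] [InnerProductSpace ℝ E] {P : AffineSubspace ℝ E}
  {d : ℕ} {c ρ : ℝ} {x q : E}

lemma AffineSubspace.exists_isometry_range_eq [FiniteDimensional ℝ E] (P : AffineSubspace ℝ E)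
    (hq : q ∈ P) : ∃ ψ : EuclideanSpace ℝ (Fin (finrank ℝ P.direction)) → E,
      Isometry ψ ∧ range ψ = P ∧ ψ 0 = q := by
  let b := stdOrthonormalBasis ℝ P.direction
  refine ⟨fun v => (b.repr.symm v : E) + q,
    (IsometryEquiv.addRight q).isometry.comp (isometry_subtype_coe.comp b.repr.symm.isometry),
    Set.ext fun y => ⟨?_, fun hy => ?_⟩, by simp⟩
  · rintro ⟨v, rfl⟩
    exact AffineSubspace.vadd_mem_of_mem_direction (b.repr.symm v).2 hq
  · exact ⟨b.repr ⟨y - q, AffineSubspace.vsub_mem_direction hy hq⟩, by simp⟩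

variable [MeasurableSpace E] [BorelSpace E]

def flatMeasure (d : ℕ) (c : ℝ) (P : AffineSubspace ℝ E) : Measure E :=
  ENNReal.ofReal c • (μH[(d : ℝ)]).restrict (P : Set E)

lemma flatMeasure_apply {s : Set E} (hs : MeasurableSet s) :
    flatMeasure d c P s = ENNReal.ofReal c * μH[(d : ℝ)] (s ∩ P) := by
  rw [flatMeasure, Measure.smul_apply, Measure.restrict_apply hs, smul_eq_mul]

lemma flatMeasure_ball_eq_zero (h : ρ ≤ infDist x P) : flatMeasure d c P (ball x ρ) = 0 := by
  rw [flatMeasure_apply measurableSet_ball,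
    (disjoint_ball_infDist.mono_left (ball_subset_ball h)).inter_eq, measure_empty, mul_zero]

variable [FiniteDimensional ℝ E]

lemma hausdorffMeasure_ball_inter_of_mem (hP : finrank ℝ P.direction = d) (hq : q ∈ P)
    (hρ : 0 < ρ) : μH[(d : ℝ)] (ball q ρ ∩ P) = ENNReal.ofReal (unitBallMeasure d * ρ ^ d) := by
  subst hP
  obtain ⟨ψ, hψ, hrange, rfl⟩ := P.exists_isometry_range_eq hq
  rw [← hrange, ← hψ.hausdorffMeasure_preimage (Or.inl (Nat.cast_nonneg _)), hψ.preimage_ball,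
    Measure.addHaar_ball_of_pos _ _ hρ, finrank_euclideanSpace_fin, unitBallMeasure,
    ENNReal.ofReal_mul measureReal_nonneg, ofReal_measureReal measure_ball_lt_top.ne, mul_comm]

lemma flatMeasure_ball_of_mem (hP : finrank ℝ P.direction = d) (hc : 0 ≤ c) (hq : q ∈ P)
    (hρ : 0 < ρ) :
    flatMeasure d c P (ball q ρ) = ENNReal.ofReal (c * unitBallMeasure d * ρ ^ d) := by
  rw [flatMeasure_apply measurableSet_ball, hausdorffMeasure_ball_inter_of_mem hP hq hρ,
    ← ENNReal.ofReal_mul hc, mul_assoc]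

lemma flatMeasure_real_ball_of_mem (hP : finrank ℝ P.direction = d) (hc : 0 ≤ c) (hq : q ∈ P)
    (hρ : 0 < ρ) : (flatMeasure d c P).real (ball q ρ) = c * unitBallMeasure d * ρ ^ d := by
  rw [measureReal_def, flatMeasure_ball_of_mem hP hc hq hρ,
    ENNReal.toReal_ofReal (by have := unitBallMeasure_pos d; positivity)]

lemma flatMeasure_ball_le (hP : finrank ℝ P.direction = d) (hc : 0 ≤ c) (x : E) :
    flatMeasure d c P (ball x ρ) ≤ ENNReal.ofReal (c * unitBallMeasure d * (2 * ρ) ^ d) := by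
  rcases (ball x ρ ∩ (P : Set E)).eq_empty_or_nonempty with h | ⟨q, hqx, hqP⟩
  · simp [flatMeasure_apply measurableSet_ball, h]
  · have hρ : 0 < ρ := nonempty_ball.1 ⟨q, hqx⟩
    rw [← flatMeasure_ball_of_mem hP hc hqP (by positivity)]
    refine measure_mono fun y hy => ?_
    rw [mem_ball] at hqx hy ⊢
    linarith [dist_triangle_right y q x]

lemma flatMeasure_closedBall_ne_top (hP : finrank ℝ P.direction = d) (hc : 0 ≤ c) (x : E)
    (ρ : ℝ) : flatMeasure d c P (closedBall x ρ) ≠ ∞ :=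
  measure_ne_top_of_subset (closedBall_subset_ball (lt_add_one ρ))
    (ne_top_of_le_ne_top ENNReal.ofReal_ne_top (flatMeasure_ball_le hP hc x))

lemma flatMeasure_real_ball_le (hP : finrank ℝ P.direction = d) (hc : 0 ≤ c) (x : E)
    (hρ : 0 ≤ ρ) : (flatMeasure d c P).real (ball x ρ) ≤ c * unitBallMeasure d * (2 * ρ) ^ d :=
  ENNReal.toReal_le_of_le_ofReal (by have := unitBallMeasure_pos d; positivity)
    (flatMeasure_ball_le hP hc x)

lemma flatMeasure_mul_pow_le_measureReal_ball_add_wdist [Nontrivial E] {σ : Measure E} {r : ℝ}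
    (hP : finrank ℝ P.direction = d) (hc : 0 ≤ c) (hq : q ∈ P) (hρ : 0 < ρ)
    (h : dist q x + 2 * ρ ≤ r) (hσ : σ (closedBall x r) ≠ ∞) :
    c * unitBallMeasure d * ρ ^ (d + 1) ≤
      2 * ρ * σ.real (ball q (2 * ρ)) + r ^ (d + 1) * wdist d x r (flatMeasure d c P) σ := by
  have hcmp := half_mul_measureReal_ball_le_add_wdist (d := d) (by positivity) h
    (flatMeasure_closedBall_ne_top hP hc x r) hσ
  rw [mul_div_cancel_left₀ ρ two_ne_zero, flatMeasure_real_ball_of_mem hP hc hq hρ] at hcmp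
  linarith [show c * unitBallMeasure d * ρ ^ (d + 1) = ρ * (c * unitBallMeasure d * ρ ^ d) by ring]

end FlatMeasure

namespace AhlforsRegular

variable {E : Type*} [NormedAddCommGroup E] [InnerProductSpace ℝ E] [FiniteDimensional ℝ E]
  [Nontrivial E] [MeasurableSpace E] [BorelSpace E] {σ : Measure E} {Γ : Set E}
  {P : AffineSubspace ℝ E} {d : ℕ} {C c r ℓ : ℝ} {x q : E}

lemma infDist_lt_of_wdist_lt (hσ : AhlforsRegular σ Γ d C) (hx : x ∈ Γ)
    (hP : finrank ℝ P.direction = d) (hc : 0 ≤ c) (hℓ : 0 < ℓ)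
    (hW : (2 ^ 10) ^ (d + 1) * wdist d x (2 ^ 10 * ℓ) (flatMeasure d c P) σ < C⁻¹) :
    infDist x P < 5 * ℓ := by
  by_contra! h
  have key := hσ.inv_mul_pow_le_measureReal_ball_add_wdist (ρ := 5 * ℓ) (r := 2 ^ 10 * ℓ) hx
    (by positivity) (by linarith) (flatMeasure_closedBall_ne_top hP hc x _)
  rw [measureReal_def, flatMeasure_ball_eq_zero h, ENNReal.toReal_zero, mul_zero, zero_add,
    mul_pow] at key
  have hC : 0 < C⁻¹ :=
    (mul_nonneg (by positivity) (wdist_nonneg d _ _ (by positivity))).trans_lt hW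
  have hpow : ℓ ^ (d + 1) ≤ (5 * ℓ / 2) ^ (d + 1) := by gcongr; linarith
  linarith [mul_lt_mul_of_pos_right hW (pow_pos hℓ (d + 1)),
    mul_le_mul_of_nonneg_left hpow hC.le]

lemma inv_le_mul_of_wdist_le (hσ : AhlforsRegular σ Γ d C) (hx : x ∈ Γ)
    (hP : finrank ℝ P.direction = d) (hc : 0 ≤ c) (hr : 0 < r)
    (hW : 4 ^ (d + 1) * wdist d x r (flatMeasure d c P) σ ≤ C⁻¹) :
    C⁻¹ ≤ 4 ^ (d + 1) * unitBallMeasure d * c := by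
  have key := hσ.inv_mul_pow_le_measureReal_ball_add_wdist hx hr le_rfl
    (flatMeasure_closedBall_ne_top hP hc x r)
  have hflat := flatMeasure_real_ball_le hP hc x hr.le
  have hW0 := wdist_nonneg d (flatMeasure d c P) σ hr.le (x := x)
  set W := wdist d x r (flatMeasure d c P) σ
  obtain ⟨a, rfl⟩ : ∃ a, r = 2 * a := ⟨r / 2, by ring⟩
  have ha : 0 < a := by linarith
  rw [mul_div_cancel_left₀ a two_ne_zero] at key
  have h1 : C⁻¹ * a ^ (d + 1) ≤
      (2 * 4 ^ d * unitBallMeasure d * c + 2 ^ (d + 1) * W) * a ^ (d + 1) :=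
    calc C⁻¹ * a ^ (d + 1)
        ≤ 2 * a * (c * unitBallMeasure d * (2 * (2 * a)) ^ d) + (2 * a) ^ (d + 1) * W :=
          key.trans (by gcongr)
      _ = _ := by rw [show 2 * (2 * a) = 4 * a by ring, mul_pow, mul_pow]; ring
  have h2 := le_of_mul_le_mul_right h1 (pow_pos ha _)
  have h24 : (2 : ℝ) ^ d * W ≤ 4 ^ d * W :=
    mul_le_mul_of_nonneg_right (pow_le_pow_left₀ (by norm_num) (by norm_num) d) hW0
  linarith [show (4 : ℝ) ^ (d + 1) * W = 4 * (4 ^ d * W) by ring,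
    show (2 : ℝ) ^ (d + 1) * W = 2 * (2 ^ d * W) by ring,
    show (4 : ℝ) ^ (d + 1) * unitBallMeasure d * c =
      2 * (2 * 4 ^ d * unitBallMeasure d * c) by ring]

lemma unitBallMeasure_mul_le_of_wdist_le (hσ : AhlforsRegular σ Γ d C) (hx : x ∈ Γ)
    (hP : finrank ℝ P.direction = d) (hc : 0 ≤ c) (hC : 0 ≤ C) (hℓ : 0 < ℓ) (hq : q ∈ P)
    (hqx : dist q x < 6 * ℓ)
    (hW : (2 ^ 10) ^ (d + 1) * wdist d x (2 ^ 10 * ℓ) (flatMeasure d c P) σ ≤ 1) :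
    unitBallMeasure d * c ≤ 2 * C * 8 ^ d + 1 := by
  have key := flatMeasure_mul_pow_le_measureReal_ball_add_wdist hP hc hq hℓ (r := 2 ^ 10 * ℓ)
    (by linarith) (hσ.measure_closedBall_ne_top hx _)
  have hball : σ.real (ball q (2 * ℓ)) ≤ C * 8 ^ d * ℓ ^ d :=
    calc σ.real (ball q (2 * ℓ)) ≤ σ.real (ball x (8 * ℓ)) :=
          measureReal_mono (ball_subset_ball' (by linarith)) (hσ.measure_ball_ne_top hx _)
      _ ≤ C * (8 * ℓ) ^ d := hσ.measureReal_ball_le hx hC (by positivity)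
      _ = C * 8 ^ d * ℓ ^ d := by ring
  rw [mul_pow] at key
  refine le_of_mul_le_mul_right ?_ (pow_pos hℓ (d + 1))
  calc unitBallMeasure d * c * ℓ ^ (d + 1)
      ≤ 2 * ℓ * (C * 8 ^ d * ℓ ^ d) + 1 * ℓ ^ (d + 1) := by
        linarith [mul_le_mul_of_nonneg_left hball (by positivity : (0 : ℝ) ≤ 2 * ℓ),
          mul_le_mul_of_nonneg_right hW (pow_pos hℓ (d + 1)).le]
    _ = (2 * C * 8 ^ d + 1) * ℓ ^ (d + 1) := by ring

end AhlforsRegular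

section Cube

variable {n : ℕ} {z X Y : EuclideanSpace ℝ (Fin n)} {s k k' ρ M : ℝ}

lemma EuclideanSpace.dist_le_of_forall_abs_sub_le (hM : 0 ≤ M) (h : ∀ i, |X i - Y i| ≤ M) :
    dist X Y ≤ M * √n := by
  rw [EuclideanSpace.dist_eq, mul_comm, ← Real.sqrt_sq hM, ← Real.sqrt_mul (Nat.cast_nonneg n)]
  refine Real.sqrt_le_sqrt ?_
  calc ∑ i, dist (X i) (Y i) ^ 2 ≤ ∑ _i : Fin n, M ^ 2 :=
        Finset.sum_le_sum fun i _ => pow_le_pow_left₀ dist_nonneg (h i) 2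
    _ = n * M ^ 2 := by simp

lemma dist_le_of_mem_cubeDilate (hs : 0 ≤ s) (hk : 0 ≤ k + k') (hX : X ∈ cubeDilate n z s k)
    (hY : Y ∈ cubeDilate n z s k') : dist X Y ≤ (k + k') / 2 * (s * √n) := by
  have := EuclideanSpace.dist_le_of_forall_abs_sub_le (by nlinarith) fun i =>
    (abs_sub_le (X i) (z i) (Y i)).trans (add_le_add (hX i) ((abs_sub_comm _ _).trans_le (hY i)))
  linarith

lemma closedBall_subset_cubeDilate (hX : X ∈ cubeDilate n z s k)
    (h : k * s / 2 + ρ ≤ k' * s / 2) : closedBall X ρ ⊆ cubeDilate n z s k' := fun Y hY i =>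
  calc |Y i - z i| ≤ |Y i - X i| + |X i - z i| := abs_sub_le _ _ _
    _ ≤ ρ + k * s / 2 :=
        add_le_add ((PiLp.dist_apply_le Y X i).trans (mem_closedBall.1 hY)) (hX i)
    _ ≤ k' * s / 2 := by linarith

end Cube

namespace AhlforsRegular

variable {n d : ℕ} [NeZero n] {Γ : Set (EuclideanSpace ℝ (Fin n))}
  {σ : Measure (EuclideanSpace ℝ (Fin n))} {P : AffineSubspace ℝ (EuclideanSpace ℝ (Fin n))}
  {C c s : ℝ} {z ξ : EuclideanSpace ℝ (Fin n)}

lemma le_dist_of_wdist_lt {X p : EuclideanSpace ℝ (Fin n)} (hσ : AhlforsRegular σ Γ d C)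
    (hξ : ξ ∈ Γ) (hσΓ : σ.restrict Γ = σ) (h20 : cubeDilate n z s 20 ⊆ Γᶜ)
    (hξQ : ξ ∈ cubeDilate n z s 60) (hP : finrank ℝ P.direction = d) (hc : 0 ≤ c) (hs : 0 < s)
    (hX : X ∈ cubeDilate n z s 2) (hp : p ∈ P)
    (hW : (2 ^ 9 * √n) ^ (d + 1) * wdist d ξ (2 ^ 10 * (s * √n)) (flatMeasure d c P) σ <
      unitBallMeasure d * c) :
    5 * s ≤ dist X p := by
  by_contra! h
  have hn : s ≤ s * √n :=
    le_mul_of_one_le_right hs.le (Real.one_le_sqrt.2 (by exact_mod_cast NeZero.one_le))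
  have hp12 : p ∈ cubeDilate n z s 12 :=
    closedBall_subset_cubeDilate hX (by linarith) (mem_closedBall'.2 h.le)
  have hpξ := dist_le_of_mem_cubeDilate hs.le (by norm_num) hp12 hξQ
  have hσp : σ.real (ball p (2 * (2 * s))) = 0 := by
    have hΓ : ball p (2 * (2 * s)) ⊆ Γᶜ := ball_subset_closedBall.trans
      ((closedBall_subset_cubeDilate hp12 (by linarith)).trans h20)
    rw [measureReal_def, ← hσΓ, Measure.restrict_apply measurableSet_ball,
      (subset_compl_iff_disjoint_right.1 hΓ).inter_eq, measure_empty, ENNReal.toReal_zero]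
  have key := flatMeasure_mul_pow_le_measureReal_ball_add_wdist hP hc hp (ρ := 2 * s)
    (r := 2 ^ 10 * (s * √n)) (by positivity) (by linarith) (hσ.measure_closedBall_ne_top hξ _)
  rw [hσp, mul_zero, zero_add, show (2 ^ 10 * (s * √n)) ^ (d + 1) =
    (2 ^ 9 * √n) ^ (d + 1) * (2 * s) ^ (d + 1) by rw [← mul_pow]; ring_nf] at key
  nlinarith [mul_lt_mul_of_pos_right hW (pow_pos (by positivity : (0 : ℝ) < 2 * s) (d + 1))]

lemma whitneyCube_estimates (hσ : AhlforsRegular σ Γ d C) (hξ : ξ ∈ Γ)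
    (hσΓ : σ.restrict Γ = σ) (h20 : cubeDilate n z s 20 ⊆ Γᶜ) (hξQ : ξ ∈ cubeDilate n z s 60)
    (hP : finrank ℝ P.direction = d) (hPne : (P : Set (EuclideanSpace ℝ (Fin n))).Nonempty)
    (hc : 0 ≤ c) (hC : 1 ≤ C) (hs : 0 < s)
    (hW : 4 ^ (d + 1) * ((2 ^ 10 * √n) ^ (d + 1) *
      wdist d ξ (2 ^ 10 * (s * √n)) (flatMeasure d c P) σ) < C⁻¹) :
    infDist ξ P < 5 * (s * √n) ∧ (∀ X ∈ cubeDilate n z s 2, ∀ p ∈ P, 5 * s ≤ dist X p) ∧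
      C⁻¹ ≤ 4 ^ (d + 1) * unitBallMeasure d * c ∧ unitBallMeasure d * c ≤ 2 * C * 8 ^ d + 1 := by
  have hn : 1 ≤ √(n : ℝ) := Real.one_le_sqrt.2 (by exact_mod_cast NeZero.one_le)
  have hℓ : 0 < s * √n := by positivity
  have hW0 := wdist_nonneg d (flatMeasure d c P) σ (x := ξ) (by positivity : 0 ≤ 2 ^ 10 * (s * √n))
  set W := wdist d ξ (2 ^ 10 * (s * √n)) (flatMeasure d c P) σ
  set T : ℝ := (2 ^ 10 * √n) ^ (d + 1)
  have hT : 1 ≤ T := one_le_pow₀ (by nlinarith)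
  have h10 : (2 ^ 10) ^ (d + 1) * W ≤ T * W :=
    mul_le_mul_of_nonneg_right (pow_le_pow_left₀ (by norm_num) (by nlinarith) _) hW0
  have h9 : (2 ^ 9 * √n) ^ (d + 1) * W ≤ T * W :=
    mul_le_mul_of_nonneg_right (pow_le_pow_left₀ (by positivity) (by nlinarith) _) hW0
  have h4 : T * W ≤ 4 ^ (d + 1) * (T * W) :=
    le_mul_of_one_le_left (by positivity) (one_le_pow₀ (by norm_num))
  have hTW : 4 ^ (d + 1) * W ≤ 4 ^ (d + 1) * (T * W) := by
    gcongr
    exact le_mul_of_one_le_left hW0 hT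
  have hA := hσ.infDist_lt_of_wdist_lt hξ hP hc hℓ ((h10.trans h4).trans_lt hW)
  obtain ⟨p₀, hp₀, hp₀ξ⟩ := (infDist_lt_iff hPne).1 hA
  have hlow := hσ.inv_le_mul_of_wdist_le hξ hP hc (by positivity) (hTW.trans hW.le)
  refine ⟨hA, fun X hX p hp => hσ.le_dist_of_wdist_lt hξ hσΓ h20 hξQ hP hc hs hX hp ?_, hlow,
    hσ.unitBallMeasure_mul_le_of_wdist_le hξ hP hc (by linarith) hℓ hp₀
      (by rw [dist_comm]; linarith) (by linarith [inv_le_one_of_one_le₀ hC])⟩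
  refine lt_of_mul_lt_mul_left ?_ (by positivity : (0 : ℝ) ≤ 4 ^ (d + 1))
  calc 4 ^ (d + 1) * ((2 ^ 9 * √n) ^ (d + 1) * W) ≤ 4 ^ (d + 1) * (T * W) := by gcongr
    _ < C⁻¹ := hW
    _ ≤ 4 ^ (d + 1) * (unitBallMeasure d * c) := by linarith

end AhlforsRegular

theorem stmt11_general (n d : ℕ) (hdn : d < n) (Cσ : ℝ) (hCσ : 1 ≤ Cσ) :
    ∃ ε > 0, ∀ (Γ : Set (EuclideanSpace ℝ (Fin n))), IsClosed Γ →
      ∀ (σ : Measure (EuclideanSpace ℝ (Fin n))), σ.restrict Γ = σ →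
      AhlforsRegular σ Γ d Cσ →
      ∀ (z : EuclideanSpace ℝ (Fin n)) (s : ℝ), 0 < s →
      cubeDilate n z s 20 ⊆ Γᶜ →
      ∀ ξQ ∈ cubeDilate n z s 60 ∩ Γ,
      ∀ (cQ : ℝ) (PQ : AffineSubspace ℝ (EuclideanSpace ℝ (Fin n)))
        (μQ : Measure (EuclideanSpace ℝ (Fin n))),
        0 < cQ → (PQ : Set (EuclideanSpace ℝ (Fin n))).Nonempty →
        Module.finrank ℝ PQ.direction = d →
        μQ = ENNReal.ofReal cQ •
          (μH[(d : ℝ)]).restrict (PQ : Set (EuclideanSpace ℝ (Fin n))) →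
        wdist d ξQ (2 ^ 10 * (s * Real.sqrt n)) μQ σ
          ≤ 2 * alphaNum d σ ξQ (2 ^ 10 * (s * Real.sqrt n)) →
        alphaNum d σ ξQ (2 ^ 10 * (s * Real.sqrt n)) ≤ ε →
        infDist ξQ (PQ : Set (EuclideanSpace ℝ (Fin n))) ≤ 5 * (s * Real.sqrt n) ∧
        (∀ X ∈ cubeDilate n z s 2, ∀ p ∈ (PQ : Set (EuclideanSpace ℝ (Fin n))),
          5 * (s * Real.sqrt n) / Real.sqrt n ≤ dist X p) ∧
        ε ≤ cQ ∧ cQ ≤ 1 / ε := by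
  have : NeZero n := ⟨by omega⟩
  have hω := unitBallMeasure_pos d
  have hC : 0 < Cσ⁻¹ := inv_pos.2 (by linarith)
  have hn : 0 < √(n : ℝ) := Real.sqrt_pos.2 (by exact_mod_cast NeZero.pos n)
  have hT : 0 < ((2 : ℝ) ^ 10 * √n) ^ (d + 1) := by positivity
  set T : ℝ := ((2 : ℝ) ^ 10 * √n) ^ (d + 1)
  -- The three terms give, in turn, the smallness required by `whitneyCube_estimates`,
  -- `ε ≤ c_Q` from its lower bound, and `c_Q ≤ 1/ε` from its upper bound.
  set ε := min (Cσ⁻¹ / (4 ^ (d + 2) * T))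
    (min (Cσ⁻¹ / (4 ^ (d + 1) * unitBallMeasure d)) (unitBallMeasure d / (2 * Cσ * 8 ^ d + 1)))
  have hε : 0 < ε := by positivity
  refine ⟨ε, hε, ?_⟩
  rintro Γ - σ hσΓ hσ z s hs h20 ξ ⟨hξQ, hξΓ⟩ c P μ hc hPne hP rfl hWα hα
  have hW : 4 ^ (d + 1) * (T * wdist d ξ (2 ^ 10 * (s * √n)) (flatMeasure d c P) σ) < Cσ⁻¹ := by
    have hεT := (le_div_iff₀' (by positivity)).1 (min_le_left _ _ : ε ≤ _)
    calc _ ≤ 4 ^ (d + 1) * (T * (2 * ε)) := by gcongr; exact hWα.trans (by linarith)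
      _ = 4 ^ (d + 2) * T * ε / 2 := by ring
      _ < Cσ⁻¹ := by linarith
  obtain ⟨hA, hB, hlow, hupp⟩ :=
    hσ.whitneyCube_estimates hξΓ hσΓ h20 hξQ hP hPne hc.le hCσ hs hW
  refine ⟨hA.le, fun X hX p hp => ?_, ?_, ?_⟩
  · rw [show 5 * (s * √n) / √n = 5 * s by field_simp]
    exact hB X hX p hp
  · exact (min_le_right _ _).trans <| (min_le_left _ _).trans <|
      (div_le_iff₀ (by positivity)).2 (by linarith)
  · rw [le_div_iff₀ hε]
    calc c * ε ≤ c * (unitBallMeasure d / (2 * Cσ * 8 ^ d + 1)) := by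
          gcongr
          exact (min_le_right _ _).trans (min_le_right _ _)
      _ ≤ 1 := by rw [mul_div_assoc', div_le_one (by positivity)]; linarith

/-- For a Whitney cube `Q` (with `20Q ⊂ Ω`, `ξ_Q ∈ 60Q ∩ Γ`,
`ℓ(Q) = diam Q = s√n`) and a flat measure `μ_Q = c_Q μ_{P_Q}` with
`dist_Q(μ_Q,σ) ≤ 2α_Q`, there is `ε > 0` depending only on `C_σ`, `d`, `n` such that
`α_Q ≤ ε` implies `dist(ξ_Q,P_Q) ≤ 5ℓ(Q)`, `dist(2Q,P_Q) ≥ 5ℓ(Q)/√n`, and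
`ε ≤ c_Q ≤ 1/ε`. -/
theorem stmt11 (n d : ℕ) (hd : 0 < d) (hdn : d < n) (Cσ : ℝ) (hCσ : 1 ≤ Cσ) :
    ∃ ε > 0, ∀ (Γ : Set (EuclideanSpace ℝ (Fin n))), IsClosed Γ →
      ∀ (σ : Measure (EuclideanSpace ℝ (Fin n))), σ.restrict Γ = σ →
      AhlforsRegular σ Γ d Cσ →
      ∀ (z : EuclideanSpace ℝ (Fin n)) (s : ℝ), 0 < s →
      cubeDilate n z s 20 ⊆ Γᶜ →
      ∀ ξQ ∈ cubeDilate n z s 60 ∩ Γ,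
      ∀ (cQ : ℝ) (PQ : AffineSubspace ℝ (EuclideanSpace ℝ (Fin n)))
        (μQ : Measure (EuclideanSpace ℝ (Fin n))),
        0 < cQ → (PQ : Set (EuclideanSpace ℝ (Fin n))).Nonempty →
        Module.finrank ℝ PQ.direction = d →
        μQ = ENNReal.ofReal cQ •
          (μH[(d : ℝ)]).restrict (PQ : Set (EuclideanSpace ℝ (Fin n))) →
        wdist d ξQ (2 ^ 10 * (s * Real.sqrt n)) μQ σ
          ≤ 2 * alphaNum d σ ξQ (2 ^ 10 * (s * Real.sqrt n)) →
        alphaNum d σ ξQ (2 ^ 10 * (s * Real.sqrt n)) ≤ ε →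
        infDist ξQ (PQ : Set (EuclideanSpace ℝ (Fin n))) ≤ 5 * (s * Real.sqrt n) ∧
        (∀ X ∈ cubeDilate n z s 2, ∀ p ∈ (PQ : Set (EuclideanSpace ℝ (Fin n))),
          5 * (s * Real.sqrt n) / Real.sqrt n ≤ dist X p) ∧
        ε ≤ cQ ∧ cQ ≤ 1 / ε :=
  stmt11_general n d hdn Cσ hCσ
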